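/- The closure ordinal is countable: for every monotone F : Set ℕ → Set ℕ there exists a countable ordinal α (i.e. an ordinal α with cardinality at most ℵ₀, equivalently α < ω₁) such that F^α(∅) = lfp F; consequently the least ordinal α with F^α(∅) = lfp F is countable. -/

import Mathlib

open Ordinal

/-- Ordinal-indexed approximants of `F`: `F^0(∅) = ∅`, `F^(α+1)(∅) = F (F^α(∅))`, and
`F^λ(∅) = ⋃_{β < λ} F^β(∅)` for limit `λ`. -/
noncomputable def approx (F : Set ℕ → Set ℕ) (α : Ordinal) : Set ℕ :=
  Ordinal.limitRecOn α ∅ (fun _ ih => F ih) (fun β _ ih => ⋃ γ : {γ : Ordinal // γ < β}, ih γ.1 γ.2)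

/-- The least fixed point of `F` in the complete lattice `Set ℕ`. -/
def lfpSet (F : Set ℕ → Set ℕ) : Set ℕ := ⋂₀ {A : Set ℕ | F A ⊆ A}

/-!
Whenever the approximants grow strictly from stage `a` to stage `a + 1`, pick a natural number
that enters at that stage; these numbers are pairwise distinct, so the approximants cannot grow at
each of the uncountably many stages below `ω₁`. At a countable stage `α` where they stop growing,
`F^α(∅)` is a prefixed point of `F` contained in `lfp F`, hence equal to it.
-/

open Cardinal

theorem Ordinal.not_countable_Iio_omega_one : ¬ Countable (Set.Iio ω₁) := by
  intro h
  have := mk_le_aleph0 (α := Set.Iio ω₁)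
  rw [Cardinal.mk_Iio_ordinal, card_omega, lift_le_aleph0] at this
  exact aleph0_lt_aleph_one.not_ge this

theorem Ordinal.card_le_aleph0_of_lt_omega_one {o : Ordinal} (h : o < ω₁) : o.card ≤ ℵ₀ := by
  rwa [← ord_aleph, lt_ord, lt_aleph_one_iff] at h

theorem Monotone.exists_lt_omega_one_add_one_eq {ι : Type*} [Countable ι] {s : Ordinal → Set ι}
    (hs : Monotone s) : ∃ a < ω₁, s (a + 1) = s a := by
  by_contra! hgrow
  have hnew (a : Set.Iio ω₁) : (s (a.1 + 1) \ s a).Nonempty :=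
    Set.sdiff_nonempty.2 fun h => hgrow a a.2 (h.antisymm (hs le_self_add))
  choose g hg using hnew
  -- `g a` enters at stage `a + 1`, so it lies in `s b` for every `b > a`, while `g b ∉ s b`.
  have hg_inj : Function.Injective g := .of_lt_imp_ne fun a b hab heq =>
    (hg b).2 (heq ▸ hs (Order.add_one_le_of_lt hab) (hg a).1)
  exact not_countable_Iio_omega_one hg_inj.countable

section approx

variable {F : Set ℕ → Set ℕ}

@[simp]
theorem approx_zero (F : Set ℕ → Set ℕ) : approx F 0 = ∅ :=
  limitRecOn_zero _ _ _

@[simp]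
theorem approx_add_one (F : Set ℕ → Set ℕ) (α : Ordinal) : approx F (α + 1) = F (approx F α) :=
  limitRecOn_add_one _ _ _ _

theorem approx_of_isSuccLimit (F : Set ℕ → Set ℕ) {α : Ordinal} (h : Order.IsSuccLimit α) :
    approx F α = ⋃ β : Set.Iio α, approx F β :=
  limitRecOn_limit _ _ _ _ h

theorem approx_subset_approx_add_one (hF : Monotone F) (α : Ordinal) :
    approx F α ⊆ approx F (α + 1) := by
  induction α using Ordinal.limitRecOn with
  | zero => simp
  | add_one β ih => simpa using hF ih
  | limit α hα ih =>
    rw [approx_add_one, approx_of_isSuccLimit F hα]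
    refine Set.iUnion_subset fun β => (ih β β.2).trans ?_
    rw [approx_add_one]
    exact hF (Set.subset_iUnion (fun β : Set.Iio α => approx F β) β)

theorem approx_mono (hF : Monotone F) : Monotone (approx F) := by
  intro β α hβα
  induction α using Ordinal.limitRecOn with
  | zero => rw [nonpos_iff_eq_zero.1 hβα]
  | add_one γ ih =>
    rcases hβα.eq_or_lt with rfl | hβγ
    · rfl
    · exact (ih (Order.lt_add_one_iff.1 hβγ)).trans (approx_subset_approx_add_one hF γ)
  | limit α hα ih =>
    rcases hβα.eq_or_lt with rfl | hβα
    · rfl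
    · rw [approx_of_isSuccLimit F hα]
      exact Set.subset_iUnion (fun γ : Set.Iio α => approx F γ) ⟨β, hβα⟩

theorem lfpSet_eq_lfp (hF : Monotone F) : lfpSet F = OrderHom.lfp ⟨F, hF⟩ := rfl

theorem approx_subset_lfpSet (hF : Monotone F) (α : Ordinal) : approx F α ⊆ lfpSet F := by
  induction α using Ordinal.limitRecOn with
  | zero => simp
  | add_one β ih =>
    rw [approx_add_one, lfpSet_eq_lfp hF, ← OrderHom.map_lfp]
    exact hF ih
  | limit α hα ih =>
    rw [approx_of_isSuccLimit F hα]
    exact Set.iUnion_subset fun β => ih β β.2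

theorem approx_eq_lfpSet_of_add_one_eq (hF : Monotone F) {α : Ordinal}
    (h : approx F (α + 1) = approx F α) : approx F α = lfpSet F :=
  (approx_subset_lfpSet hF α).antisymm <| by
    rw [lfpSet_eq_lfp hF]
    exact OrderHom.lfp_le _ (by simpa using h.le)

theorem exists_lt_omega_one_approx_eq_lfpSet (hF : Monotone F) :
    ∃ α < ω₁, approx F α = lfpSet F :=
  let ⟨α, hα, hstable⟩ := (approx_mono hF).exists_lt_omega_one_add_one_eq
  ⟨α, hα, approx_eq_lfpSet_of_add_one_eq hF hstable⟩

end approx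

/-- The closure ordinal is countable: there is a countable ordinal `α` with
`F^α(∅) = lfp F`, and consequently the least such ordinal is countable. -/
theorem closure_ordinal_countable (F : Set ℕ → Set ℕ)
    (hF : ∀ A B : Set ℕ, A ⊆ B → F A ⊆ F B) :
    (∃ α : Ordinal, α.card ≤ Cardinal.aleph0 ∧ approx F α = lfpSet F) ∧
    (sInf {α : Ordinal | approx F α = lfpSet F}).card ≤ Cardinal.aleph0 := by
  have hmono : Monotone F := fun A B => hF A B
  -- the two `Ordinal`s of the statement live in independent universes
  constructor
  · obtain ⟨α, hα, hlfp⟩ := exists_lt_omega_one_approx_eq_lfpSet hmono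
    exact ⟨α, card_le_aleph0_of_lt_omega_one hα, hlfp⟩
  · obtain ⟨α, hα, hlfp⟩ := exists_lt_omega_one_approx_eq_lfpSet hmono
    exact (card_le_card (csInf_le' hlfp)).trans (card_le_aleph0_of_lt_omega_one hα)
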